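/- arXiv:0805.3484 — 2 statements merged into one kernel-verified Lean document; each statement's English description precedes it below -/
import Mathlib

section
/- Let (A,B,C,E) be the CCF of a minimal encoder G of an (n,k,δ) convolutional code C, let (Â,B̂,Ĉ,Ê) be the CCF of a minimal encoder Ĝ of the dual code Ĉ, set Δ = {(X,Y) ∈ F^δ × F^δ : Y = XA + uB for some u ∈ F^k}, C_const = C ∩ F^n, Ω = {(X,Y) ∈ Δ : XC + Y B^T E ∈ C_const}, and K = ker(C Ê^T B̂). Then the map σ: K → F^δ sending X to the unique Y with (X,Y) ∈ Ω is well-defined, linear, and injective; moreover K contains no nonzero σ-invariant subset, i.e. if X ∈ K satisfies σ^i(X) ∈ K for all i ≥ 0, then X = 0. -/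
open Polynomial Matrix
open scoped Classical

noncomputable section

namespace ConvCode

variable (F : Type) [Field F] [Fintype F]

/-- Hamming weight of a vector. -/
def wt {n : ℕ} (a : Fin n → F) : ℕ := (Finset.univ.filter fun j => a j ≠ 0).card

/-- Weight enumerator of a set of vectors in `F^n`, as a polynomial in `ℂ[W]`. -/
def weSet {n : ℕ} (S : Set (Fin n → F)) : Polynomial ℂ :=
  ∑ a ∈ (Set.toFinite S).toFinset, (Polynomial.X : Polynomial ℂ) ^ wt F a

/-- The `i`-th row degree of a polynomial matrix. -/
def rowDeg {k n : ℕ} (G : Matrix (Fin k) (Fin n) (Polynomial F)) (i : Fin k) : ℕ :=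
  Finset.univ.sup fun j => (G i j).natDegree

/-- `G` is basic: it has a polynomial right inverse. -/
def IsBasic {k n : ℕ} (G : Matrix (Fin k) (Fin n) (Polynomial F)) : Prop :=
  ∃ H : Matrix (Fin n) (Fin k) (Polynomial F), G * H = 1

/-- The degree of the code: maximal degree of the `k × k` minors of `G`. -/
def codeDeg {k n : ℕ} (G : Matrix (Fin k) (Fin n) (Polynomial F)) : ℕ :=
  Finset.univ.sup fun f : Fin k ↪ Fin n => ((G.submatrix id f).det).natDegree

/-- A minimal (basic) encoder: the sum of the row degrees equals the degree of the code. -/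
def IsMinimalEncoder {k n : ℕ} (G : Matrix (Fin k) (Fin n) (Polynomial F)) : Prop :=
  IsBasic F G ∧ ∑ i, rowDeg F G i = codeDeg F G

/-- The convolutional code generated by the encoder `G`. -/
def code {k n : ℕ} (G : Matrix (Fin k) (Fin n) (Polynomial F)) : Set (Fin n → Polynomial F) :=
  Set.range fun u : Fin k → Polynomial F => u ᵥ* G

/-- The (module-theoretic) dual of a convolutional code. -/
def dualCode {n : ℕ} (𝓒 : Set (Fin n → Polynomial F)) : Set (Fin n → Polynomial F) :=
  {w | ∀ v ∈ 𝓒, w ⬝ᵥ v = 0}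

/-- The sequence-space pairing `⟨⟨v,w⟩⟩ = ∑_t v_t w_tᵀ`. -/
def seqPair {n : ℕ} (v w : Fin n → Polynomial F) : F :=
  ∑ j, ∑ t ∈ Finset.range ((v j).natDegree + 1), (v j).coeff t * (w j).coeff t

/-- The sequence space dual of a convolutional code. -/
def seqDual {n : ℕ} (𝓒 : Set (Fin n → Polynomial F)) : Set (Fin n → Polynomial F) :=
  {w | ∀ v ∈ 𝓒, ∀ l : ℕ, seqPair F v (fun j => Polynomial.X ^ l * w j) = 0}

/-- Index set of the state space of the controller canonical form:
a state index is a pair `(i, ν)` with `i` a row index and `ν < δ_i`. -/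
abbrev StateIdx (k : ℕ) (d : Fin k → ℕ) : Type := (i : Fin k) × Fin (d i)

/-- The state-transition matrix `A` of the controller canonical form. -/
def ccfA {k : ℕ} (d : Fin k → ℕ) : Matrix (StateIdx k d) (StateIdx k d) F :=
  Matrix.of fun s t => if s.1 = t.1 ∧ (s.2 : ℕ) + 1 = (t.2 : ℕ) then 1 else 0

/-- The input-to-state matrix `B` of the controller canonical form. -/
def ccfB {k : ℕ} (d : Fin k → ℕ) : Matrix (Fin k) (StateIdx k d) F :=
  Matrix.of fun i t => if t.1 = i ∧ (t.2 : ℕ) = 0 then 1 else 0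

/-- The state-to-output matrix `C` of the controller canonical form. -/
def ccfC {k n : ℕ} (d : Fin k → ℕ) (G : Matrix (Fin k) (Fin n) (Polynomial F)) :
    Matrix (StateIdx k d) (Fin n) F :=
  Matrix.of fun s j => (G s.1 j).coeff ((s.2 : ℕ) + 1)

/-- The matrix `E = G(0)` of the controller canonical form. -/
def ccfE {k n : ℕ} (G : Matrix (Fin k) (Fin n) (Polynomial F)) : Matrix (Fin k) (Fin n) F :=
  Matrix.of fun i j => (G i j).coeff 0

/-- The state index set of the controller canonical form of `G`. -/
abbrev States {k n : ℕ} (G : Matrix (Fin k) (Fin n) (Polynomial F)) : Type :=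
  StateIdx k (rowDeg F G)

def matA {k n : ℕ} (G : Matrix (Fin k) (Fin n) (Polynomial F)) :
    Matrix (States F G) (States F G) F := ccfA F (rowDeg F G)

def matB {k n : ℕ} (G : Matrix (Fin k) (Fin n) (Polynomial F)) :
    Matrix (Fin k) (States F G) F := ccfB F (rowDeg F G)

def matC {k n : ℕ} (G : Matrix (Fin k) (Fin n) (Polynomial F)) :
    Matrix (States F G) (Fin n) F := ccfC F (rowDeg F G) G

def matE {k n : ℕ} (G : Matrix (Fin k) (Fin n) (Polynomial F)) :
    Matrix (Fin k) (Fin n) F := ccfE F G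

/-- The weight adjacency matrix of a state space realization `(A,B,C,E)`. -/
def WAM {σ : Type} [Fintype σ] {k n : ℕ} (A : Matrix σ σ F) (B : Matrix (Fin k) σ F)
    (C : Matrix σ (Fin n) F) (E : Matrix (Fin k) (Fin n) F) :
    Matrix (σ → F) (σ → F) (Polynomial ℂ) :=
  Matrix.of fun X Y =>
    weSet F {v | ∃ u : Fin k → F, Y = X ᵥ* A + u ᵥ* B ∧ v = X ᵥ* C + u ᵥ* E}

/-- The weight adjacency matrix of an encoder `G` (via its controller canonical form). -/
def wam {k n : ℕ} (G : Matrix (Fin k) (Fin n) (Polynomial F)) :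
    Matrix (States F G → F) (States F G → F) (Polynomial ℂ) :=
  WAM F (matA F G) (matB F G) (matC F G) (matE F G)

/-- The block code `C_const = 𝓒 ∩ F^n` of constant codewords. -/
def constSet {k n : ℕ} (G : Matrix (Fin k) (Fin n) (Polynomial F)) : Set (Fin n → F) :=
  {w | (fun j => Polynomial.C (w j)) ∈ code F G}

/-- The block code `C_coeff` of coefficient vectors of codewords. -/
def coeffSet {k n : ℕ} (G : Matrix (Fin k) (Fin n) (Polynomial F)) : Set (Fin n → F) :=
  {w | ∃ v ∈ code F G, ∃ t : ℕ, ∀ j, (v j).coeff t = w j}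

/-- The dual of a block code. -/
def blockDual {n : ℕ} (S : Set (Fin n → F)) : Set (Fin n → F) :=
  {w | ∀ v ∈ S, w ⬝ᵥ v = 0}

/-- `Δ`: the set of state pairs `(X,Y)` admitting a transition `Y = XA + uB`. -/
def Delta {k n : ℕ} (G : Matrix (Fin k) (Fin n) (Polynomial F)) :
    Set ((States F G → F) × (States F G → F)) :=
  {p | ∃ u : Fin k → F, p.2 = p.1 ᵥ* matA F G + u ᵥ* matB F G}

/-- `Δ⁻ = {(0,Y) : Y ∈ im A}`. -/
def DeltaMinus {k n : ℕ} (G : Matrix (Fin k) (Fin n) (Polynomial F)) :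
    Set ((States F G → F) × (States F G → F)) :=
  {p | p.1 = 0 ∧ ∃ X : States F G → F, p.2 = X ᵥ* matA F G}

/-- `Ω = {(X,Y) ∈ Δ : XC + Y Bᵀ E ∈ C_const}`. -/
def Omega {k n : ℕ} (G : Matrix (Fin k) (Fin n) (Polynomial F)) :
    Set ((States F G → F) × (States F G → F)) :=
  {p | p ∈ Delta F G ∧
    p.1 ᵥ* matC F G + (p.2 ᵥ* (matB F G)ᵀ) ᵥ* matE F G ∈ constSet F G}

/-- Orthogonal of a set of state pairs with respect to the standard bilinear form on `F^{2δ}`. -/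
def pairPerp {σ : Type} [Fintype σ] (S : Set ((σ → F) × (σ → F))) :
    Set ((σ → F) × (σ → F)) :=
  {p | ∀ s ∈ S, p.1 ⬝ᵥ s.1 + p.2 ⬝ᵥ s.2 = 0}

/-- `S_0 = Bᵀ E` and `S_i = Bᵀ B A^{i-1} C` for `i ≥ 1`. -/
def Smat {k n : ℕ} (d : Fin k → ℕ) (G : Matrix (Fin k) (Fin n) (Polynomial F)) :
    ℕ → Matrix (StateIdx k d) (Fin n) F
  | 0 => (ccfB F d)ᵀ * ccfE F G
  | (i + 1) => (ccfB F d)ᵀ * ccfB F d * ccfA F d ^ i * ccfC F d G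

def Sm {k n : ℕ} (G : Matrix (Fin k) (Fin n) (Polynomial F)) :
    ℕ → Matrix (States F G) (Fin n) F := Smat F (rowDeg F G) G

/-- The matrix `N = ∑_{m≥2} ∑_{i=1}^{m-1} ∑_{j=0}^{i-1} (Âᵀ)^{i-1} Ŝ_j S_{m-j}ᵀ A^{m-(i+1)}`
(all summands with `m ≥ δ + δ̂` vanish, so the sum is truncated there). -/
def Nm {k kb n : ℕ} (G : Matrix (Fin k) (Fin n) (Polynomial F))
    (Gh : Matrix (Fin kb) (Fin n) (Polynomial F)) :
    Matrix (States F Gh) (States F G) F :=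
  ∑ m ∈ Finset.Icc 2 (Fintype.card (States F G) + Fintype.card (States F Gh)),
    ∑ i ∈ Finset.Icc 1 (m - 1), ∑ j ∈ Finset.range i,
      (matA F Gh)ᵀ ^ (i - 1) * Sm F Gh j * (Sm F G (m - j))ᵀ * matA F G ^ (m - (i + 1))

/-- The reciprocal matrix `G' = diag(D^{δ_1},…,D^{δ_k}) · G(D⁻¹)`. -/
def recip {k n : ℕ} (G : Matrix (Fin k) (Fin n) (Polynomial F)) :
    Matrix (Fin k) (Fin n) (Polynomial F) :=
  Matrix.of fun i j => (G i j).reflect (rowDeg F G i)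

/-- The block diagonal matrix `R` whose blocks are the anti-identity matrices. -/
def Rmat {k : ℕ} (d : Fin k → ℕ) : Matrix (StateIdx k d) (StateIdx k d) F :=
  Matrix.of fun s t => if s.1 = t.1 ∧ (s.2 : ℕ) + (t.2 : ℕ) + 1 = d s.1 then 1 else 0

/-- The MacWilliams matrix `𝓗 = q^{-δ/2} (ζ^{τ(X Yᵀ)})_{X,Y}`. -/
def macH (σ : Type) [Fintype σ] (p : ℕ) [Algebra (ZMod p) F] (ζ : ℂ) :
    Matrix (σ → F) (σ → F) ℂ :=
  Matrix.of fun X Y =>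
    (((Real.sqrt (Fintype.card F) : ℝ) : ℂ))⁻¹ ^ Fintype.card σ *
      ζ ^ (Algebra.trace (ZMod p) F (X ⬝ᵥ Y)).val

/-- The MacWilliams transform `H(f)(W) = (1+(q-1)W)^n f((1-W)/(1+(q-1)W))`
on polynomials of degree at most `n`. -/
def macWT (q n : ℕ) (f : Polynomial ℂ) : Polynomial ℂ :=
  ∑ j ∈ Finset.range (n + 1),
    Polynomial.C (f.coeff j) * (1 - Polynomial.X) ^ j *
      (1 + Polynomial.C ((q : ℂ) - 1) * Polynomial.X) ^ (n - j)

end ConvCode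

/-!
`Ω` is the graph of a linear relation whose two projections are injective. By the predictable
degree property, every `w ∈ C_const` is `a E` with `a` supported on the rows of degree zero.
Hence `(0, W) ∈ Ω` forces the input `W Bᵀ`, which lives on the rows of positive degree, to
vanish, because `E` has full row rank (`G` is basic). If `(Z, 0) ∈ Ω`, only the last state of
each row block survives and `Z C = z [G]_hr`, so `z = 0` because the leading row coefficient
matrix `[G]_hr` of a minimal encoder has full row rank. For `X ∈ K`, duality gives
`Ê (X C)ᵀ = 0`, a dimension count writes `X C = a E`, and the input `-a` produces the partner `Y`.

A `σ`-invariant trajectory drives the encoder with inputs `u_t` and outputs in `C_const`.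
Multiplying the resulting codeword by a polynomial right inverse of `G` shows that the inputs
vanish from some time on; hence so do the states, and injectivity of `σ` carries this back to
the initial state.
-/

namespace Polynomial

theorem coeff_prod_sum_of_natDegree_le {R ι : Type*} [CommSemiring R] (s : Finset ι)
    (f : ι → R[X]) (d : ι → ℕ) (h : ∀ i ∈ s, (f i).natDegree ≤ d i) :
    (∏ i ∈ s, f i).coeff (∑ i ∈ s, d i) = ∏ i ∈ s, (f i).coeff (d i) := by
  classical
  induction s using Finset.induction_on with
  | empty => simp
  | insert a s ha ih =>
    have hs : ∀ i ∈ s, (f i).natDegree ≤ d i := fun i hi => h i (Finset.mem_insert_of_mem hi)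
    rw [Finset.prod_insert ha, Finset.sum_insert ha, Finset.prod_insert ha,
      coeff_mul_add_eq_of_natDegree_le (h a (Finset.mem_insert_self a s))
        ((natDegree_prod_le _ _).trans (Finset.sum_le_sum hs)), ih hs]

theorem coeff_mul_eq_sum_fin_of_natDegree_le {R : Type*} [CommSemiring R] {p q : R[X]} {d r : ℕ}
    (hp : p.natDegree ≤ d) (hdr : d ≤ r) :
    (q * p).coeff r =
      ∑ ν : Fin d, q.coeff (r - (ν + 1)) * p.coeff (ν + 1) + q.coeff r * p.coeff 0 := by
  rw [mul_comm, coeff_mul, Finset.Nat.sum_antidiagonal_eq_sum_range_succ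
    (fun a b => p.coeff a * q.coeff b), ← Finset.sum_subset
      (Finset.range_subset_range.mpr (Nat.succ_le_succ hdr)) fun μ _ hμ => ?_]
  · rw [Finset.sum_range_succ', Fin.sum_univ_eq_sum_range
      (fun ν => q.coeff (r - (ν + 1)) * p.coeff (ν + 1))]
    simp [mul_comm]
  · rw [coeff_eq_zero_of_natDegree_lt (by simp at hμ; omega), zero_mul]

end Polynomial

namespace Matrix

variable {R m : Type*} [CommRing R] [Fintype m]

theorem coeff_det_of_natDegree_le [DecidableEq m] (M : Matrix m m R[X]) (d : m → ℕ)
    (h : ∀ i j, (M i j).natDegree ≤ d i) :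
    M.det.coeff (∑ i, d i) = (of fun i j => (M i j).coeff (d i)).det := by
  rw [det_apply', det_apply', finsetSum_coeff]
  refine Finset.sum_congr rfl fun σ _ => ?_
  rw [← Equiv.sum_comp σ d, coeff_intCast_mul,
    coeff_prod_sum_of_natDegree_le _ _ _ fun i _ => h (σ i) i]
  rfl

variable {K ι κ : Type*} [Field K] [Fintype ι] [Fintype κ]

theorem exists_vecMul_eq_of_mulVec_eq_zero {P : Matrix ι m K} {Q : Matrix κ m K}
    (hPQ : P * Qᵀ = 0) (hP : LinearIndependent K P.row) (hQ : LinearIndependent K Q.row)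
    (hcard : Fintype.card ι + Fintype.card κ = Fintype.card m) {v : m → K}
    (hv : Q *ᵥ v = 0) : ∃ a, a ᵥ* P = v := by
  have hle : LinearMap.range P.vecMulLinear ≤ LinearMap.ker Q.mulVecLin := by
    rintro _ ⟨a, rfl⟩
    simp [← vecMul_transpose, vecMul_vecMul, hPQ]
  have hrange : Module.finrank K (LinearMap.range P.vecMulLinear) = Fintype.card ι := by
    rw [LinearMap.finrank_range_of_inj (vecMul_injective_iff.mpr hP),
      Module.finrank_fintype_fun_eq_card]
  have hker : Module.finrank K (LinearMap.ker Q.mulVecLin) = Fintype.card ι := by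
    have hrank : Q.rank = Fintype.card κ := by
      rw [rank_eq_finrank_span_row, finrank_span_eq_card hQ]
    have := LinearMap.finrank_range_add_finrank_ker Q.mulVecLin
    rw [← rank, hrank, Module.finrank_fintype_fun_eq_card] at this
    omega
  have heq := Submodule.eq_of_le_of_finrank_le hle (by rw [hrange, hker])
  exact (heq ▸ hv : v ∈ LinearMap.range P.vecMulLinear)

end Matrix

namespace ConvCode

variable {F : Type} [Field F]

section Encoder

variable {k n : ℕ} (G : Matrix (Fin k) (Fin n) F[X])

theorem natDegree_le_rowDeg (i : Fin k) (j : Fin n) : (G i j).natDegree ≤ rowDeg F G i :=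
  Finset.le_sup (f := fun j => (G i j).natDegree) (Finset.mem_univ j)

theorem matE_eq_map : matE F G = G.map constantCoeff := by
  ext i j
  simp [matE, ccfE]

theorem eq_C_matE_of_rowDeg_eq_zero {i : Fin k} (h : rowDeg F G i = 0) (j : Fin n) :
    G i j = C (matE F G i j) :=
  eq_C_of_natDegree_eq_zero (Nat.le_zero.mp (h ▸ natDegree_le_rowDeg G i j))

def rowLeadingCoeff : Matrix (Fin k) (Fin n) F :=
  Matrix.of fun i j => (G i j).coeff (rowDeg F G i)

theorem rowLeadingCoeff_of_rowDeg_eq_zero {i : Fin k} (h : rowDeg F G i = 0) :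
    rowLeadingCoeff G i = matE F G i := by
  ext j
  simp [rowLeadingCoeff, matE, ccfE, h]

variable {G}

theorem linearIndependent_matE (hG : IsBasic F G) : LinearIndependent F (matE F G).row := by
  obtain ⟨H, hH⟩ := hG
  have hEH : matE F G * H.map constantCoeff = 1 := by
    rw [matE_eq_map, ← Matrix.map_mul, hH, Matrix.map_one _ (map_zero _) (map_one _)]
  rw [← Matrix.vecMul_injective_iff]
  intro a b hab
  simpa [Matrix.vecMul_vecMul, hEH] using congrArg (· ᵥ* H.map constantCoeff) hab

theorem linearIndependent_rowLeadingCoeff (hG : IsMinimalEncoder F G) :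
    LinearIndependent F (rowLeadingCoeff G).row := by
  by_cases hδ : ∑ i, rowDeg F G i = 0
  · have hE : rowLeadingCoeff G = matE F G := funext fun i =>
      rowLeadingCoeff_of_rowDeg_eq_zero G (Finset.sum_eq_zero_iff.mp hδ i (Finset.mem_univ i))
    exact hE ▸ linearIndependent_matE hG.1
  have hne : (Finset.univ : Finset (Fin k ↪ Fin n)).Nonempty := by
    by_contra h
    rw [Finset.not_nonempty_iff_eq_empty] at h
    exact hδ (by rw [hG.2, codeDeg, h, Finset.sup_empty]; rfl)
  obtain ⟨f, -, hf⟩ := Finset.exists_mem_eq_sup _ hne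
    fun f : Fin k ↪ Fin n => (G.submatrix id f).det.natDegree
  have hdeg : (G.submatrix id f).det.natDegree = ∑ i, rowDeg F G i := by
    rw [hG.2, ← hf]
    rfl
  -- the top coefficient of a `k × k` minor of maximal degree is the corresponding minor of `[G]_hr`
  have hdet : ((rowLeadingCoeff G).submatrix id f).det ≠ 0 := by
    have htop := Matrix.coeff_det_of_natDegree_le (G.submatrix id f) (rowDeg F G)
      fun i j => natDegree_le_rowDeg G i (f j)
    rw [← hdeg] at htop
    refine htop ▸ leadingCoeff_ne_zero.mpr fun h0 => hδ ?_
    rw [← hdeg, h0, natDegree_zero]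
  have hsub := Matrix.linearIndependent_rows_of_isUnit
    ((Matrix.isUnit_iff_isUnit_det _).mpr (isUnit_iff_ne_zero.mpr hdet))
  exact hsub.of_comp (LinearMap.funLeft F F f)

theorem coeff_vecMul_eq_vecMul_rowLeadingCoeff (u : Fin k → F[X]) {m : ℕ}
    (hu : ∀ i, u i ≠ 0 → (u i).natDegree + rowDeg F G i ≤ m) (j : Fin n) :
    ((u ᵥ* G) j).coeff m =
      ((fun i => (u i).coeff (m - rowDeg F G i)) ᵥ* rowLeadingCoeff G) j := by
  simp only [Matrix.vecMul, dotProduct, finsetSum_coeff]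
  refine Finset.sum_congr rfl fun i _ => ?_
  by_cases hi : u i = 0
  · simp [hi]
  · have h := coeff_mul_add_eq_of_natDegree_le (le_tsub_of_add_le_right (hu i hi))
      (natDegree_le_rowDeg G i j)
    rwa [Nat.sub_add_cancel (le_of_add_le_right (hu i hi))] at h

/-- The predictable degree property of a minimal encoder. -/
theorem natDegree_add_rowDeg_le (hG : IsMinimalEncoder F G) {u : Fin k → F[X]} {D : ℕ}
    (hD : ∀ j, ((u ᵥ* G) j).natDegree ≤ D) {i : Fin k} (hi : u i ≠ 0) :
    (u i).natDegree + rowDeg F G i ≤ D := by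
  set T := Finset.univ.filter fun i => u i ≠ 0
  set m := T.sup fun i => (u i).natDegree + rowDeg F G i
  have hle : ∀ i, u i ≠ 0 → (u i).natDegree + rowDeg F G i ≤ m := fun i hi =>
    Finset.le_sup (f := fun i => (u i).natDegree + rowDeg F G i) (by simp [T, hi])
  obtain ⟨i₀, hi₀T, hi₀⟩ := Finset.exists_mem_eq_sup T ⟨i, by simp [T, hi]⟩
    fun i => (u i).natDegree + rowDeg F G i
  refine (hle i hi).trans (not_lt.mp fun hDm => (Finset.mem_filter.mp hi₀T).2 ?_)
  have htop : (fun i => (u i).coeff (m - rowDeg F G i)) = 0 := by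
    refine Matrix.vecMul_injective_iff.mpr (linearIndependent_rowLeadingCoeff hG) ?_
    change _ ᵥ* _ = 0 ᵥ* _
    ext j
    rw [← coeff_vecMul_eq_vecMul_rowLeadingCoeff u hle, Matrix.zero_vecMul]
    exact coeff_eq_zero_of_natDegree_lt ((hD j).trans_lt hDm)
  have h := congrFun htop i₀
  rwa [show m = _ from hi₀, Nat.add_sub_cancel, Pi.zero_apply, coeff_natDegree,
    leadingCoeff_eq_zero] at h

theorem vecMul_matE_mem_constSet {a : Fin k → F} (ha : ∀ i, rowDeg F G i ≠ 0 → a i = 0) :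
    a ᵥ* matE F G ∈ constSet F G := by
  refine ⟨fun i => C (a i), funext fun j => ?_⟩
  simp only [Matrix.vecMul, dotProduct, map_sum, C_mul]
  refine Finset.sum_congr rfl fun i _ => ?_
  by_cases hi : rowDeg F G i = 0
  · rw [eq_C_matE_of_rowDeg_eq_zero G hi j]
  · simp [ha i hi]

theorem exists_vecMul_matE_eq_of_mem_constSet (hG : IsMinimalEncoder F G) {w : Fin n → F}
    (hw : w ∈ constSet F G) :
    ∃ a : Fin k → F, (∀ i, rowDeg F G i ≠ 0 → a i = 0) ∧ a ᵥ* matE F G = w := by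
  obtain ⟨u, hu⟩ := hw
  have hu' : u ᵥ* G = fun j => C (w j) := hu
  have hvanish : ∀ i, rowDeg F G i ≠ 0 → u i = 0 := fun i hi => by
    by_contra hui
    have := natDegree_add_rowDeg_le hG (D := 0) (fun j => by rw [hu', natDegree_C]) hui
    omega
  refine ⟨fun i => (u i).coeff 0, fun i hi => by simp [hvanish i hi], funext fun j => ?_⟩
  have h := congrArg (fun v => (v j).coeff 0) hu'
  simpa [Matrix.vecMul, dotProduct, finsetSum_coeff, mul_coeff_zero, matE, ccfE] using h

theorem eq_zero_of_vecMul_mem_constSet (hG : IsMinimalEncoder F G) {M : Matrix (Fin k) (Fin n) F}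
    (hM : LinearIndependent F M.row) (hME : ∀ i, rowDeg F G i = 0 → M i = matE F G i)
    {z : Fin k → F} (hz : ∀ i, rowDeg F G i = 0 → z i = 0) (h : z ᵥ* M ∈ constSet F G) :
    z = 0 := by
  obtain ⟨a, ha, haz⟩ := exists_vecMul_matE_eq_of_mem_constSet hG h
  have hEM : a ᵥ* matE F G = a ᵥ* M := by
    ext j
    simp only [Matrix.vecMul, dotProduct]
    refine Finset.sum_congr rfl fun i _ => ?_
    by_cases hi : rowDeg F G i = 0
    · rw [hME i hi]
    · simp [ha i hi]
  have hza : z = a := Matrix.vecMul_injective_iff.mpr hM (haz.symm.trans hEM)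
  ext i
  by_cases hi : rowDeg F G i = 0
  · exact hz i hi
  · rw [hza]
    exact ha i hi

theorem constSet_add_mem {v w : Fin n → F} (hv : v ∈ constSet F G) (hw : w ∈ constSet F G) :
    v + w ∈ constSet F G := by
  obtain ⟨u₁, h₁⟩ := hv
  obtain ⟨u₂, h₂⟩ := hw
  refine ⟨u₁ + u₂, ?_⟩
  simp only [Matrix.add_vecMul] at h₁ h₂ ⊢
  rw [h₁, h₂]
  ext j
  simp

theorem constSet_smul_mem (c : F) {w : Fin n → F} (hw : w ∈ constSet F G) :
    c • w ∈ constSet F G := by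
  obtain ⟨u, hu⟩ := hw
  refine ⟨C c • u, ?_⟩
  simp only [Matrix.smul_vecMul] at hu ⊢
  rw [hu]
  ext j
  simp [C_mul]

theorem vecMul_apply_eq_zero_of_mem_constSet (hG : IsMinimalEncoder F G)
    {H : Matrix (Fin n) (Fin k) F[X]} (hH : G * H = 1) {w : Fin n → F} (hw : w ∈ constSet F G)
    {l : Fin k} (hl : rowDeg F G l ≠ 0) : ((fun j => C (w j)) ᵥ* H) l = 0 := by
  obtain ⟨u, hu⟩ := hw
  have hu' : u ᵥ* G = fun j => C (w j) := hu
  rw [← hu', Matrix.vecMul_vecMul, hH, Matrix.vecMul_one]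
  by_contra hul
  have := natDegree_add_rowDeg_le hG (D := 0) (fun j => by rw [hu', natDegree_C]) hul
  omega

end Encoder

section StateSpace

variable {k n : ℕ} (G : Matrix (Fin k) (Fin n) F[X])

theorem vecMul_matA_succ (X : States F G → F) {i : Fin k} {ν : ℕ}
    (h : ν + 1 < rowDeg F G i) :
    (X ᵥ* matA F G) ⟨i, ⟨ν + 1, h⟩⟩ = X ⟨i, ⟨ν, by omega⟩⟩ := by
  rw [Matrix.vecMul, dotProduct, Fintype.sum_eq_single ⟨i, ⟨ν, by omega⟩⟩]
  · simp [matA, ccfA]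
  · rintro ⟨i', ν'⟩ hne
    simp only [matA, ccfA, Matrix.of_apply]
    rw [if_neg, mul_zero]
    rintro ⟨rfl, h'⟩
    exact hne (by simp [Fin.ext_iff] at h' ⊢; omega)

theorem vecMul_matA_zero (X : States F G → F) {i : Fin k} (h : 0 < rowDeg F G i) :
    (X ᵥ* matA F G) ⟨i, ⟨0, h⟩⟩ = 0 := by
  simp [Matrix.vecMul, dotProduct, matA, ccfA]

theorem vecMul_matB_apply (u : Fin k → F) (s : States F G) :
    (u ᵥ* matB F G) s = if (s.2 : ℕ) = 0 then u s.1 else 0 := by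
  by_cases h : (s.2 : ℕ) = 0 <;> simp [Matrix.vecMul, dotProduct, matB, ccfB, h]

theorem vecMul_transpose_matB_apply (Y : States F G → F) (i : Fin k) :
    (Y ᵥ* (matB F G)ᵀ) i = if h : 0 < rowDeg F G i then Y ⟨i, ⟨0, h⟩⟩ else 0 := by
  simp only [Matrix.vecMul, dotProduct, matB, ccfB, Matrix.transpose_apply, Matrix.of_apply,
    mul_ite, mul_one, mul_zero]
  split_ifs with h
  · rw [Fintype.sum_eq_single ⟨i, ⟨0, h⟩⟩]
    · simp
    · rintro ⟨i', ν⟩ hs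
      refine if_neg ?_
      rintro ⟨rfl, h2⟩
      exact hs (by simp only at h2; simp [Fin.ext_iff, h2])
  · exact Finset.sum_eq_zero fun s _ => if_neg fun ⟨h1, _⟩ => h (h1 ▸ s.2.pos)

variable {G}

theorem apply_succ_of_mem_Delta {X Y : States F G → F} (h : (X, Y) ∈ Delta F G) {i : Fin k}
    {ν : ℕ} (hν : ν + 1 < rowDeg F G i) : Y ⟨i, ⟨ν + 1, hν⟩⟩ = X ⟨i, ⟨ν, by omega⟩⟩ := by
  obtain ⟨u, hu⟩ := h
  rw [show Y = _ from hu, Pi.add_apply, vecMul_matA_succ, vecMul_matB_apply]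
  simp

theorem add_mem_Omega {p q : (States F G → F) × (States F G → F)} (hp : p ∈ Omega F G)
    (hq : q ∈ Omega F G) : p + q ∈ Omega F G := by
  obtain ⟨⟨u₁, h₁⟩, hc₁⟩ := hp
  obtain ⟨⟨u₂, h₂⟩, hc₂⟩ := hq
  refine ⟨⟨u₁ + u₂, ?_⟩, ?_⟩
  · simp only [Prod.fst_add, Prod.snd_add, Matrix.add_vecMul, h₁, h₂]
    abel
  · convert constSet_add_mem hc₁ hc₂ using 1
    simp only [Prod.fst_add, Prod.snd_add, Matrix.add_vecMul]
    abel

theorem smul_mem_Omega (c : F) {p : (States F G → F) × (States F G → F)} (hp : p ∈ Omega F G) :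
    c • p ∈ Omega F G := by
  obtain ⟨⟨u, hu⟩, hc⟩ := hp
  refine ⟨⟨c • u, ?_⟩, ?_⟩
  · simp only [Prod.smul_fst, Prod.smul_snd, Matrix.smul_vecMul, hu, smul_add]
  · convert constSet_smul_mem c hc using 1
    simp only [Prod.smul_fst, Prod.smul_snd, Matrix.smul_vecMul, smul_add]

theorem sub_mem_Omega {p q : (States F G → F) × (States F G → F)} (hp : p ∈ Omega F G)
    (hq : q ∈ Omega F G) : p - q ∈ Omega F G := by
  simpa [sub_eq_add_neg] using add_mem_Omega hp (smul_mem_Omega (-1) hq)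

theorem eq_zero_of_zero_mk_mem_Omega (hG : IsMinimalEncoder F G) {W : States F G → F}
    (h : (0, W) ∈ Omega F G) : W = 0 := by
  obtain ⟨⟨u, hu⟩, hc⟩ := h
  have hWu : W = u ᵥ* matB F G := by simpa using hu
  have hB : W ᵥ* (matB F G)ᵀ = 0 := by
    refine eq_zero_of_vecMul_mem_constSet hG (linearIndependent_matE hG.1) (fun _ _ => rfl)
      (fun i hi => ?_) (by simpa using hc)
    rw [vecMul_transpose_matB_apply, dif_neg (by omega)]
  ext ⟨i, ν, hν⟩
  rw [hWu, vecMul_matB_apply]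
  split_ifs with hν0
  · have h0 := congrFun hB i
    simp only at hν0
    subst hν0
    rwa [vecMul_transpose_matB_apply, dif_pos hν, hWu, vecMul_matB_apply, if_pos rfl] at h0
  · rfl

theorem vecMul_matC_eq_vecMul_rowLeadingCoeff {Z : States F G → F}
    (hZ : ∀ (i : Fin k) (ν : ℕ) (h : ν + 1 < rowDeg F G i), Z ⟨i, ⟨ν, by omega⟩⟩ = 0) :
    Z ᵥ* matC F G = (fun i => if h : 0 < rowDeg F G i then
      Z ⟨i, ⟨rowDeg F G i - 1, by omega⟩⟩ else 0) ᵥ* rowLeadingCoeff G := by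
  ext j
  simp only [Matrix.vecMul, dotProduct, Fintype.sum_sigma]
  refine Finset.sum_congr rfl fun i _ => ?_
  split_ifs with h
  · rw [Fintype.sum_eq_single ⟨rowDeg F G i - 1, by omega⟩]
    · simp [matC, ccfC, rowLeadingCoeff, Nat.sub_add_cancel h]
    · intro ν hν
      have hlt : (ν : ℕ) + 1 < rowDeg F G i := by
        have : (ν : ℕ) ≠ rowDeg F G i - 1 := fun e => hν (Fin.ext e)
        omega
      rw [hZ i ν hlt, zero_mul]
  · have : rowDeg F G i = 0 := by omega
    simp [Fin.isEmpty', this]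

theorem eq_zero_of_mk_zero_mem_Omega (hG : IsMinimalEncoder F G) {Z : States F G → F}
    (h : (Z, 0) ∈ Omega F G) : Z = 0 := by
  obtain ⟨hΔ, hc⟩ := h
  have hZ : ∀ (i : Fin k) (ν : ℕ) (h : ν + 1 < rowDeg F G i), Z ⟨i, ⟨ν, by omega⟩⟩ = 0 :=
    fun i ν h => (apply_succ_of_mem_Delta hΔ h).symm
  have hc' := vecMul_matC_eq_vecMul_rowLeadingCoeff hZ ▸
    (by simpa using hc : Z ᵥ* matC F G ∈ constSet F G)
  have hlast := eq_zero_of_vecMul_mem_constSet hG (linearIndependent_rowLeadingCoeff hG)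
    (fun i hi => rowLeadingCoeff_of_rowDeg_eq_zero G hi)
    (fun i (hi : rowDeg F G i = 0) => dif_neg (by omega)) hc'
  ext ⟨i, ν, hν⟩
  by_cases hlt : ν + 1 < rowDeg F G i
  · exact hZ i ν hlt
  · have h := congrFun hlast i
    simp only [dif_pos (show 0 < rowDeg F G i by omega)] at h
    obtain rfl : ν = rowDeg F G i - 1 := by omega
    exact h

theorem leftUnique_Omega (hG : IsMinimalEncoder F G) :
    Relator.LeftUnique fun X Y : States F G → F => (X, Y) ∈ Omega F G := fun _ _ _ h h' =>
  sub_eq_zero.mp (eq_zero_of_mk_zero_mem_Omega hG (by simpa using sub_mem_Omega h h'))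

theorem rightUnique_Omega (hG : IsMinimalEncoder F G) :
    Relator.RightUnique fun X Y : States F G → F => (X, Y) ∈ Omega F G := fun _ _ _ h h' =>
  sub_eq_zero.mp (eq_zero_of_zero_mk_mem_Omega hG (by simpa using sub_mem_Omega h h'))

end StateSpace

section Duality

variable {k kb n : ℕ} {G : Matrix (Fin k) (Fin n) F[X]} {Gh : Matrix (Fin kb) (Fin n) F[X]}

theorem row_dotProduct_row_eq_zero (hdual : code F Gh = dualCode F (code F G)) (l : Fin kb)
    (i : Fin k) : Gh l ⬝ᵥ G i = 0 := by
  have hrow : ∀ {m} (M : Matrix (Fin m) (Fin n) F[X]) (i : Fin m), M i ∈ code F M :=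
    fun M i => ⟨Pi.single i 1, Matrix.single_one_vecMul i M⟩
  exact (hdual ▸ hrow Gh l : Gh l ∈ dualCode F (code F G)) _ (hrow G i)

theorem matE_mul_transpose_matE (hdual : code F Gh = dualCode F (code F G)) :
    matE F G * (matE F Gh)ᵀ = 0 := by
  ext i l
  have h := congrArg (coeff · 0) (row_dotProduct_row_eq_zero hdual l i)
  simpa [dotProduct, Matrix.mul_apply, finsetSum_coeff, mul_coeff_zero, matE, ccfE, mul_comm]
    using h

theorem matC_mulVec_matE_eq_zero_of_rowDeg_eq_zero (hdual : code F Gh = dualCode F (code F G))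
    {l : Fin kb} (hl : rowDeg F Gh l = 0) : matC F G *ᵥ matE F Gh l = 0 := by
  ext s
  have h := congrArg (coeff · ((s.2 : ℕ) + 1)) (row_dotProduct_row_eq_zero hdual l s.1)
  simp only [dotProduct, finsetSum_coeff] at h
  simpa [Matrix.mulVec, dotProduct, matC, ccfC, eq_C_matE_of_rowDeg_eq_zero Gh hl, coeff_C_mul,
    mul_comm] using h

theorem matE_mulVec_vecMul_matC_eq_zero (hdual : code F Gh = dualCode F (code F G))
    {X : States F G → F} (hX : X ᵥ* (matC F G * (matE F Gh)ᵀ * matB F Gh) = 0) :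
    matE F Gh *ᵥ (X ᵥ* matC F G) = 0 := by
  ext l
  by_cases hl : rowDeg F Gh l = 0
  · rw [Pi.zero_apply, Matrix.mulVec, dotProduct_comm, ← Matrix.dotProduct_mulVec,
      matC_mulVec_matE_eq_zero_of_rowDeg_eq_zero hdual hl, dotProduct_zero]
  · have h := congrFun hX ⟨l, ⟨0, by omega⟩⟩
    rwa [← Matrix.vecMul_vecMul, ← Matrix.vecMul_vecMul, vecMul_matB_apply, if_pos rfl,
      Matrix.vecMul_transpose] at h

theorem exists_mem_Omega (hkn : k + kb = n) (hG : IsBasic F G) (hGh : IsBasic F Gh)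
    (hdual : code F Gh = dualCode F (code F G)) {X : States F G → F}
    (hX : X ᵥ* (matC F G * (matE F Gh)ᵀ * matB F Gh) = 0) :
    ∃ Y : States F G → F, (X, Y) ∈ Omega F G := by
  obtain ⟨a, ha⟩ := Matrix.exists_vecMul_eq_of_mulVec_eq_zero (matE_mul_transpose_matE hdual)
    (linearIndependent_matE hG) (linearIndependent_matE hGh) (by simpa using hkn)
    (matE_mulVec_vecMul_matC_eq_zero hdual hX)
  refine ⟨X ᵥ* matA F G - a ᵥ* matB F G, ⟨-a, by rw [Matrix.neg_vecMul, sub_eq_add_neg]⟩, ?_⟩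
  -- the input `-a` cancels `a ᵥ* E` on the rows of positive degree
  convert vecMul_matE_mem_constSet (a := fun i => if rowDeg F G i = 0 then a i else 0)
    (fun i hi => if_neg hi) using 1
  ext j
  simp only [← ha, ← Matrix.add_vecMul]
  congr 1
  ext i
  simp only [Pi.add_apply, vecMul_transpose_matB_apply, Pi.sub_apply]
  split_ifs with h₁ h₂ <;> first | omega | simp [vecMul_matA_zero, vecMul_matB_apply]

end Duality

section Trajectory

variable {k n : ℕ} (G : Matrix (Fin k) (Fin n) F[X])

/-- The state at time `r` of the encoder driven by the coefficient sequence of `U`. -/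
def stateAt (U : Fin k → F[X]) (r : ℕ) : States F G → F :=
  fun s => (U s.1).coeff (r - (s.2 + 1))

theorem coeff_vecMul_eq_stateAt (U : Fin k → F[X]) {r : ℕ} (hr : ∀ i, rowDeg F G i ≤ r) :
    (fun j => ((U ᵥ* G) j).coeff r) =
      stateAt G U r ᵥ* matC F G + (fun i => (U i).coeff r) ᵥ* matE F G := by
  ext j
  simp only [Matrix.vecMul, dotProduct, finsetSum_coeff, Pi.add_apply, Fintype.sum_sigma]
  rw [← Finset.sum_add_distrib]
  refine Finset.sum_congr rfl fun i _ => ?_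
  rw [coeff_mul_eq_sum_fin_of_natDegree_le (natDegree_le_rowDeg G i j) (hr i)]
  rfl

variable {G}

theorem coeff_eq_zero_of_coeff_vecMul_mem_constSet (hG : IsMinimalEncoder F G)
    {H : Matrix (Fin n) (Fin k) F[X]} (hH : G * H = 1) {D : ℕ}
    (hD : ∀ j l, (H j l).natDegree ≤ D) {U : Fin k → F[X]} {a T : ℕ}
    (hU : ∀ s, a ≤ s → s ≤ T → (fun j => ((U ᵥ* G) j).coeff s) ∈ constSet F G)
    (hT : a + D ≤ T) {l : Fin k} (hl : rowDeg F G l ≠ 0) : (U l).coeff T = 0 := by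
  set V := U ᵥ* G with hV
  rw [show U l = (V ᵥ* H) l by rw [hV, Matrix.vecMul_vecMul, hH, Matrix.vecMul_one],
    Matrix.vecMul, dotProduct, finsetSum_coeff]
  simp only [coeff_mul]
  rw [Finset.sum_comm]
  refine Finset.sum_eq_zero fun sm hsm => ?_
  rw [Finset.HasAntidiagonal.mem_antidiagonal] at hsm
  by_cases hs : a ≤ sm.1
  · have h0 := congrArg (coeff · sm.2)
      (vecMul_apply_eq_zero_of_mem_constSet hG hH (hU sm.1 hs (by omega)) hl)
    simpa [Matrix.vecMul, dotProduct, finsetSum_coeff, coeff_C_mul] using h0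
  · refine Finset.sum_eq_zero fun j _ => ?_
    rw [coeff_eq_zero_of_natDegree_lt ((hD j l).trans_lt (by omega)), mul_zero]

theorem apply_add_succ_of_forall_mem_Delta {x : ℕ → States F G → F}
    (hx : ∀ t, (x t, x (t + 1)) ∈ Delta F G) (ν t : ℕ) {i : Fin k} (hν : ν < rowDeg F G i) :
    x (t + ν + 1) ⟨i, ⟨ν, hν⟩⟩ = (x (t + 1) ᵥ* (matB F G)ᵀ) i := by
  induction ν with
  | zero => simp [vecMul_transpose_matB_apply, hν]
  | succ ν ih =>
    rw [show t + (ν + 1) + 1 = t + ν + 1 + 1 by ring, apply_succ_of_mem_Delta (hx _) hν, ih]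

theorem exists_forall_ge_input_eq_zero (hG : IsMinimalEncoder F G) {x : ℕ → States F G → F}
    (hx : ∀ t, (x t, x (t + 1)) ∈ Omega F G) :
    ∃ T, ∀ t, T ≤ t → x (t + 1) ᵥ* (matB F G)ᵀ = 0 := by
  obtain ⟨H, hH⟩ := hG.1
  set dm := Finset.univ.sup (rowDeg F G)
  set dH := Finset.univ.sup fun jl : Fin n × Fin k => (H jl.1 jl.2).natDegree
  have hdm : ∀ i, rowDeg F G i ≤ dm := fun i => Finset.le_sup (Finset.mem_univ i)
  refine ⟨dm + dH, fun t ht => funext fun l => ?_⟩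
  by_cases hl : rowDeg F G l = 0
  · simp [vecMul_transpose_matB_apply, hl]
  -- `U` collects the inputs up to time `t`; for `dm ≤ s ≤ t` the coefficient of `D^s` in `U G`
  -- is the output `x s C + u_s E` of the trajectory
  set U : Fin k → F[X] := fun i =>
    ∑ s ∈ Finset.range (t + 1), monomial s ((x (s + 1) ᵥ* (matB F G)ᵀ) i)
  have hUcoeff : ∀ i s, s ≤ t → (U i).coeff s = (x (s + 1) ᵥ* (matB F G)ᵀ) i := by
    intro i s hs
    simp [U, finsetSum_coeff, coeff_monomial, Nat.lt_succ_of_le hs]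
  have hout : ∀ s, dm ≤ s → s ≤ t → (fun j => ((U ᵥ* G) j).coeff s) ∈ constSet F G := by
    intro s hs hst
    have hstate : stateAt G U s = x s := by
      ext ⟨i, ν, hν⟩
      rw [stateAt, hUcoeff i _ (by omega), ← apply_add_succ_of_forall_mem_Delta
        (fun t => (hx t).1) ν (s - (ν + 1)) hν]
      congr
      have := hdm i
      omega
    rw [coeff_vecMul_eq_stateAt G U fun i => (hdm i).trans hs, hstate]
    convert (hx s).2 using 3
    exact funext fun i => hUcoeff i s hst
  have h := coeff_eq_zero_of_coeff_vecMul_mem_constSet hG hH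
    (fun j l => Finset.le_sup (f := fun jl : Fin n × Fin k => (H jl.1 jl.2).natDegree)
      (Finset.mem_univ (j, l))) hout ht hl
  rwa [hUcoeff l t le_rfl] at h

theorem exists_forall_ge_eq_zero_of_mem_Omega (hG : IsMinimalEncoder F G)
    {x : ℕ → States F G → F} (hx : ∀ t, (x t, x (t + 1)) ∈ Omega F G) :
    ∃ T, ∀ t, T ≤ t → x t = 0 := by
  obtain ⟨T, hT⟩ := exists_forall_ge_input_eq_zero hG hx
  refine ⟨T + Finset.univ.sup (rowDeg F G), fun t ht => ?_⟩
  ext ⟨i, ν, hν⟩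
  have hi : rowDeg F G i ≤ Finset.univ.sup (rowDeg F G) := Finset.le_sup (Finset.mem_univ i)
  rw [show t = t - (ν + 1) + ν + 1 by omega,
    apply_add_succ_of_forall_mem_Delta (fun t => (hx t).1), hT _ (by omega)]
  rfl

theorem eq_zero_of_forall_mem_Omega (hG : IsMinimalEncoder F G) {x : ℕ → States F G → F}
    (hx : ∀ t, (x t, x (t + 1)) ∈ Omega F G) : x 0 = 0 := by
  obtain ⟨T, hT⟩ := exists_forall_ge_eq_zero_of_mem_Omega hG hx
  have hback : ∀ m t, T ≤ t + m → x t = 0 := by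
    intro m
    induction m with
    | zero => exact hT
    | succ m ih =>
      exact fun t ht => eq_zero_of_mk_zero_mem_Omega hG (ih (t + 1) (by omega) ▸ hx t)
  exact hback T 0 (by omega)

end Trajectory

end ConvCode

theorem statement12_general {F : Type} [Field F]
    (k kb n : ℕ) (hkn : k + kb = n)
    (G : Matrix (Fin k) (Fin n) (Polynomial F)) (hG : ConvCode.IsMinimalEncoder F G)
    (Gh : Matrix (Fin kb) (Fin n) (Polynomial F)) (hGh : ConvCode.IsMinimalEncoder F Gh)
    (hdual : ConvCode.code F Gh = ConvCode.dualCode F (ConvCode.code F G)) :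
    (∀ X : ConvCode.States F G → F,
        X ᵥ* (ConvCode.matC F G * (ConvCode.matE F Gh)ᵀ * ConvCode.matB F Gh) = 0 →
        ∃! Y : ConvCode.States F G → F, (X, Y) ∈ ConvCode.Omega F G) ∧
    (∀ p q, p ∈ ConvCode.Omega F G → q ∈ ConvCode.Omega F G →
        p + q ∈ ConvCode.Omega F G) ∧
    (∀ (c : F) p, p ∈ ConvCode.Omega F G → c • p ∈ ConvCode.Omega F G) ∧
    (∀ X X' Y : ConvCode.States F G → F,
        (X, Y) ∈ ConvCode.Omega F G → (X', Y) ∈ ConvCode.Omega F G → X = X') ∧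
    (∀ x : ℕ → (ConvCode.States F G → F),
        (∀ i, x i ᵥ* (ConvCode.matC F G * (ConvCode.matE F Gh)ᵀ * ConvCode.matB F Gh) = 0 ∧
          (x i, x (i + 1)) ∈ ConvCode.Omega F G) →
        x 0 = 0) := by
  refine ⟨fun X hX => ?_, fun _ _ => ConvCode.add_mem_Omega, fun c _ => ConvCode.smul_mem_Omega c,
    fun _ _ _ h h' => ConvCode.leftUnique_Omega hG h h',
    fun x hx => ConvCode.eq_zero_of_forall_mem_Omega hG fun t => (hx t).2⟩
  obtain ⟨Y, hY⟩ := ConvCode.exists_mem_Omega hkn hG.1 hGh.1 hdual hX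
  exact ⟨Y, hY, fun Y' hY' => ConvCode.rightUnique_Omega hG hY' hY⟩

/-- Corollary 4.6: the map `σ : K → F^δ`, `X ↦ Y` with `(X,Y) ∈ Ω`, is well defined,
linear and injective, and `K` contains no nonzero `σ`-invariant subset. -/
theorem statement12 {F : Type} [Field F] [Fintype F]
    (k kb n : ℕ) (hkn : k + kb = n)
    (G : Matrix (Fin k) (Fin n) (Polynomial F)) (hG : ConvCode.IsMinimalEncoder F G)
    (Gh : Matrix (Fin kb) (Fin n) (Polynomial F)) (hGh : ConvCode.IsMinimalEncoder F Gh)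
    (hdual : ConvCode.code F Gh = ConvCode.dualCode F (ConvCode.code F G)) :
    (∀ X : ConvCode.States F G → F,
        X ᵥ* (ConvCode.matC F G * (ConvCode.matE F Gh)ᵀ * ConvCode.matB F Gh) = 0 →
        ∃! Y : ConvCode.States F G → F, (X, Y) ∈ ConvCode.Omega F G) ∧
    (∀ p q, p ∈ ConvCode.Omega F G → q ∈ ConvCode.Omega F G →
        p + q ∈ ConvCode.Omega F G) ∧
    (∀ (c : F) p, p ∈ ConvCode.Omega F G → c • p ∈ ConvCode.Omega F G) ∧
    (∀ X X' Y : ConvCode.States F G → F,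
        (X, Y) ∈ ConvCode.Omega F G → (X', Y) ∈ ConvCode.Omega F G → X = X') ∧
    (∀ x : ℕ → (ConvCode.States F G → F),
        (∀ i, x i ᵥ* (ConvCode.matC F G * (ConvCode.matE F Gh)ᵀ * ConvCode.matB F Gh) = 0 ∧
          (x i, x (i + 1)) ∈ ConvCode.Omega F G) →
        x 0 = 0) :=
  statement12_general k kb n hkn G hG Gh hGh hdual
end
end

section
/- Let G ∈ F[D]^{k×n} be a minimal encoder with CCF (A,B,C,E) and row degrees δ_1,…,δ_k, and let G' = diag(D^{δ_1},…,D^{δ_k}) · G(D^{−1}) be its reciprocal matrix. Then the CCF of G' is (A, B, C', E'), where (C'; E') = L · (C; E) with L = (R A^T, R B^T; B R, I − B B^T) ∈ F^{(δ+k)×(δ+k)} and R ∈ GL_δ(F) the block diagonal matrix whose i-th block R_i ∈ GL_{δ_i}(F) is the anti-identity (reversal) matrix; moreover L L^T = I_{δ+k}, so L ∈ GL_{δ+k}(F). -/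
open Polynomial Matrix
open scoped Classical

noncomputable section

/-!
The reciprocal encoder has coefficients `g'_{i,t} = g_{i,δ_i - t}` for `t ≤ δ_i`. Indexing the rows
of `(C; E)` by the positions `(i, t)`, `0 ≤ t ≤ δ_i`, of the coefficients they hold, the passage from
`(C; E)` to `(C'; E')` is the reversal `t ↦ δ_i - t` within each block, i.e. multiplication by the
block anti-identity with blocks of size `δ_i + 1`. Read in the row order of `(C; E)`, that matrix is
exactly `L`; being a symmetric permutation matrix, it satisfies `L Lᵀ = I`. The row degrees do not
change because `G(0)` has no zero row, `G` being basic.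
-/

namespace ConvCode

variable {F : Type} [Field F]

section Reversal

variable {k : ℕ} {d : Fin k → ℕ}

lemma StateIdx.ext_iff {s t : StateIdx k d} : s = t ↔ s.1 = t.1 ∧ (s.2 : ℕ) = t.2 := by
  obtain ⟨i, ν⟩ := s
  obtain ⟨j, μ⟩ := t
  simp only [Sigma.mk.injEq]
  constructor
  · rintro ⟨rfl, h⟩
    exact ⟨rfl, by rw [eq_of_heq h]⟩
  · rintro ⟨rfl, h⟩
    exact ⟨rfl, heq_of_eq (Fin.ext h)⟩

def StateIdx.rev (s : StateIdx k d) : StateIdx k d := ⟨s.1, s.2.rev⟩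

lemma StateIdx.rev_involutive : Function.Involutive (StateIdx.rev (d := d)) := fun s => by
  simp [StateIdx.rev]

lemma Rmat_apply (s t : StateIdx k d) : Rmat F d s t = if t = s.rev then 1 else 0 := by
  have : (s.1 = t.1 ∧ (s.2 : ℕ) + t.2 + 1 = d s.1) ↔ t = s.rev := by
    obtain ⟨i, ν⟩ := s
    obtain ⟨j, μ⟩ := t
    simp only [StateIdx.ext_iff, StateIdx.rev, Fin.val_rev]
    constructor <;> rintro ⟨rfl, h⟩ <;> exact ⟨rfl, by omega⟩
  simp only [Rmat, Matrix.of_apply, this]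

lemma Rmat_mul_apply {β : Type} (M : Matrix (StateIdx k d) β F) (s : StateIdx k d) (j : β) :
    (Rmat F d * M) s j = M s.rev j := by
  simp [Matrix.mul_apply, Rmat_apply]

lemma Rmat_transpose : (Rmat F d)ᵀ = Rmat F d := by
  ext s t
  have : s = t.rev ↔ t = s.rev := by rw [eq_comm, StateIdx.rev_involutive.eq_iff]
  simp only [Matrix.transpose_apply, Rmat_apply, this]

lemma Rmat_mul_self : Rmat F d * Rmat F d = 1 := by
  ext s t
  simp only [Rmat_mul_apply, Rmat_apply, StateIdx.rev_involutive s, Matrix.one_apply, eq_comm]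

lemma ccfB_mul_apply {β : Type} (M : Matrix (StateIdx k d) β F) (i : Fin k) (j : β) :
    (ccfB F d * M) i j = if h : 0 < d i then M ⟨i, ⟨0, h⟩⟩ j else 0 := by
  simp only [Matrix.mul_apply, ccfB, Matrix.of_apply, ite_mul, one_mul, zero_mul]
  split_ifs with h
  · have hpos (t : StateIdx k d) : (t.1 = i ∧ (t.2 : ℕ) = 0) ↔ t = ⟨i, ⟨0, h⟩⟩ := by
      rw [StateIdx.ext_iff]
    simp only [hpos, Finset.sum_ite_eq', Finset.mem_univ, if_true]
  · refine Finset.sum_eq_zero fun t _ => if_neg ?_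
    rintro ⟨rfl, -⟩
    exact h (Nat.zero_lt_of_lt t.2.isLt)

end Reversal

section CoeffPositions

variable {k : ℕ} (d : Fin k → ℕ)

/-- Row `inl (i, ν)` of `(C; E)` holds the coefficient `g_{i,ν+1}` and row `inr i` holds `g_{i,0}`;
`coeffPos` sends each row to the position `(i, t)`, `t ≤ δ_i`, of the coefficient it holds. -/
def coeffPos : StateIdx k d ⊕ Fin k ≃ StateIdx k (fun i => d i + 1) where
  toFun := Sum.elim (fun s => ⟨s.1, s.2.succ⟩) (fun i => ⟨i, 0⟩)
  invFun t := Fin.cases (motive := fun _ => StateIdx k d ⊕ Fin k) (.inr t.1)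
    (fun ν => .inl ⟨t.1, ν⟩) t.2
  left_inv := by rintro (⟨i, ν⟩ | i) <;> rfl
  right_inv := by
    rintro ⟨i, ν⟩
    cases ν using Fin.cases <;> rfl

@[simp] lemma coeffPos_inl (s : StateIdx k d) : coeffPos d (.inl s) = ⟨s.1, s.2.succ⟩ := rfl

@[simp] lemma coeffPos_inr (i : Fin k) : coeffPos d (.inr i) = ⟨i, 0⟩ := rfl

def coeffMat {n : ℕ} (G : Matrix (Fin k) (Fin n) F[X]) :
    Matrix (StateIdx k (fun i => d i + 1)) (Fin n) F :=
  Matrix.of fun s j => (G s.1 j).coeff s.2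

lemma fromRows_ccfC_ccfE {n : ℕ} (G : Matrix (Fin k) (Fin n) F[X]) :
    Matrix.fromRows (ccfC F d G) (ccfE F G) = (coeffMat d G).submatrix (coeffPos d) id := by
  ext (s | i) j <;> rfl

end CoeffPositions

lemma Rmat_mul_coeffMat {k n : ℕ} (G : Matrix (Fin k) (Fin n) F[X]) :
    Rmat F (fun i => rowDeg F G i + 1) * coeffMat (rowDeg F G) G =
      coeffMat (rowDeg F G) (recip F G) := by
  ext s j
  rw [Rmat_mul_apply]
  simp [coeffMat, recip, StateIdx.rev, coeff_reflect, revAt_le (Nat.le_of_lt_succ s.2.isLt)]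

lemma fromBlocks_eq_submatrix_Rmat {k : ℕ} (d : Fin k → ℕ) :
    Matrix.fromBlocks (Rmat F d * (ccfA F d)ᵀ) (Rmat F d * (ccfB F d)ᵀ)
        (ccfB F d * Rmat F d) (1 - ccfB F d * (ccfB F d)ᵀ) =
      (Rmat F (fun i => d i + 1)).submatrix (coeffPos d) (coeffPos d) := by
  ext (⟨i, ν⟩ | i) (⟨j, μ⟩ | j)
  · rw [Matrix.fromBlocks_apply₁₁, Rmat_mul_apply]
    rcases eq_or_ne j i with rfl | hij
    · have := ν.isLt
      simp only [ccfA, StateIdx.rev, transpose_apply, of_apply, Fin.val_rev, true_and, Rmat,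
        Nat.add_right_cancel_iff, submatrix_apply, coeffPos_inl, Fin.val_succ]
      split_ifs <;> first | rfl | omega
    · simp [Rmat, ccfA, StateIdx.rev, hij, hij.symm]
  · rw [Matrix.fromBlocks_apply₁₂, Rmat_mul_apply]
    rcases eq_or_ne i j with rfl | hij
    · have := ν.isLt
      simp only [ccfB, StateIdx.rev, transpose_apply, of_apply, Fin.val_rev, true_and, Rmat,
        submatrix_apply, coeffPos_inl, coeffPos_inr, Fin.val_succ, Fin.val_zero, add_zero]
      split_ifs <;> first | rfl | omega
    · simp [Rmat, ccfB, StateIdx.rev, hij]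
  · rw [Matrix.fromBlocks_apply₂₁, ccfB_mul_apply]
    simp only [Rmat, of_apply, zero_add, dite_eq_ite, Nat.add_right_cancel_iff, submatrix_apply,
      coeffPos_inr, coeffPos_inl, Fin.val_zero, Fin.val_succ, ite_eq_left_iff, not_lt,
      nonpos_iff_eq_zero, right_eq_ite_iff, zero_ne_one, imp_false, not_and]
    rintro h rfl
    omega
  · rw [Matrix.fromBlocks_apply₂₂, Matrix.sub_apply, ccfB_mul_apply]
    rcases eq_or_ne i j with rfl | hij
    · rcases Nat.eq_zero_or_pos (d i) with h | h
      · simp [Rmat, h]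
      · simp [Rmat, ccfB, h, h.ne]
    · simp [Rmat, ccfB, hij]

lemma IsBasic.exists_coeff_zero_ne_zero {k n : ℕ}
    {G : Matrix (Fin k) (Fin n) F[X]} (hG : IsBasic F G) (i : Fin k) :
    ∃ j, (G i j).coeff 0 ≠ 0 := by
  obtain ⟨H, hGH⟩ := hG
  by_contra! hzero
  have hii : (G.map (evalRingHom 0) * H.map (evalRingHom 0)) i i = 1 := by
    rw [← Matrix.map_mul, hGH, Matrix.map_one _ (map_zero _) (map_one _), Matrix.one_apply_eq]
  simp [Matrix.mul_apply, ← coeff_zero_eq_eval_zero, hzero] at hii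

lemma rowDeg_recip {k n : ℕ} {G : Matrix (Fin k) (Fin n) F[X]}
    (hG : ∀ i, ∃ j, (G i j).coeff 0 ≠ 0) : rowDeg F (recip F G) = rowDeg F G := by
  funext i
  have hle (j : Fin n) : (G i j).natDegree ≤ rowDeg F G i :=
    Finset.le_sup (f := fun j => (G i j).natDegree) (Finset.mem_univ j)
  apply le_antisymm
  · exact Finset.sup_le fun j _ => natDegree_reflect_le.trans (max_le le_rfl (hle j))
  · obtain ⟨j, hj⟩ := hG i
    refine le_trans ?_ (Finset.le_sup (f := fun j => (recip F G i j).natDegree) (Finset.mem_univ j))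
    exact le_natDegree_of_ne_zero (by simpa [recip, coeff_reflect] using hj)

end ConvCode

theorem statement18_general {F : Type} [Field F]
    (k n : ℕ) (G : Matrix (Fin k) (Fin n) (Polynomial F))
    (hG : ConvCode.IsMinimalEncoder F G)
    (L : Matrix (ConvCode.States F G ⊕ Fin k) (ConvCode.States F G ⊕ Fin k) F)
    (hL : L = Matrix.fromBlocks
      (ConvCode.Rmat F (ConvCode.rowDeg F G) * (ConvCode.matA F G)ᵀ)
      (ConvCode.Rmat F (ConvCode.rowDeg F G) * (ConvCode.matB F G)ᵀ)
      (ConvCode.matB F G * ConvCode.Rmat F (ConvCode.rowDeg F G))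
      (1 - ConvCode.matB F G * (ConvCode.matB F G)ᵀ)) :
    -- G' has the same row degrees, hence the same matrices A and B in its CCF
    ConvCode.rowDeg F (ConvCode.recip F G) = ConvCode.rowDeg F G ∧
    -- C' = R Aᵀ C + R Bᵀ E
    ConvCode.ccfC F (ConvCode.rowDeg F G) (ConvCode.recip F G) =
      ConvCode.Rmat F (ConvCode.rowDeg F G) * (ConvCode.matA F G)ᵀ * ConvCode.matC F G +
        ConvCode.Rmat F (ConvCode.rowDeg F G) * (ConvCode.matB F G)ᵀ * ConvCode.matE F G ∧
    -- E' = B R C + (I − B Bᵀ) E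
    ConvCode.ccfE F (ConvCode.recip F G) =
      ConvCode.matB F G * ConvCode.Rmat F (ConvCode.rowDeg F G) * ConvCode.matC F G +
        (1 - ConvCode.matB F G * (ConvCode.matB F G)ᵀ) * ConvCode.matE F G ∧
    -- L Lᵀ = I, hence L ∈ GL_{δ+k}(F)
    L * Lᵀ = 1 ∧
    (∃ Linv, L * Linv = 1 ∧ Linv * L = 1) := by
  set d := ConvCode.rowDeg F G
  have hL_reindex : L = (ConvCode.Rmat F (fun i => d i + 1)).submatrix (ConvCode.coeffPos d)
      (ConvCode.coeffPos d) := hL.trans (ConvCode.fromBlocks_eq_submatrix_Rmat d)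
  have hLLt : L * Lᵀ = 1 := by
    rw [hL_reindex, Matrix.transpose_submatrix, ConvCode.Rmat_transpose, Matrix.submatrix_mul_equiv,
      ConvCode.Rmat_mul_self, Matrix.submatrix_one_equiv]
  have hCE : Matrix.fromRows (ConvCode.ccfC F d (ConvCode.recip F G))
      (ConvCode.ccfE F (ConvCode.recip F G)) =
        L * Matrix.fromRows (ConvCode.matC F G) (ConvCode.matE F G) := by
    rw [hL_reindex, ConvCode.matC, ConvCode.matE, ConvCode.fromRows_ccfC_ccfE,
      ConvCode.fromRows_ccfC_ccfE, Matrix.submatrix_mul_equiv, ConvCode.Rmat_mul_coeffMat]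
  rw [hL, Matrix.fromBlocks_mul_fromRows, Matrix.fromRows_ext_iff] at hCE
  exact ⟨ConvCode.rowDeg_recip hG.1.exists_coeff_zero_ne_zero, hCE.1, hCE.2, hLLt,
    Lᵀ, hLLt, mul_eq_one_comm.mp hLLt⟩

/-- Proposition 5.1: the controller canonical form of the reciprocal encoder `G'` is
`(A, B, C', E')` with `(C'; E') = L (C; E)`, where
`L = (RAᵀ, RBᵀ; BR, I − BBᵀ)` satisfies `L Lᵀ = I`, so `L ∈ GL_{δ+k}(F)`. -/
theorem statement18 {F : Type} [Field F] [Fintype F]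
    (k n : ℕ) (G : Matrix (Fin k) (Fin n) (Polynomial F))
    (hG : ConvCode.IsMinimalEncoder F G)
    (L : Matrix (ConvCode.States F G ⊕ Fin k) (ConvCode.States F G ⊕ Fin k) F)
    (hL : L = Matrix.fromBlocks
      (ConvCode.Rmat F (ConvCode.rowDeg F G) * (ConvCode.matA F G)ᵀ)
      (ConvCode.Rmat F (ConvCode.rowDeg F G) * (ConvCode.matB F G)ᵀ)
      (ConvCode.matB F G * ConvCode.Rmat F (ConvCode.rowDeg F G))
      (1 - ConvCode.matB F G * (ConvCode.matB F G)ᵀ)) :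
    -- G' has the same row degrees, hence the same matrices A and B in its CCF
    ConvCode.rowDeg F (ConvCode.recip F G) = ConvCode.rowDeg F G ∧
    -- C' = R Aᵀ C + R Bᵀ E
    ConvCode.ccfC F (ConvCode.rowDeg F G) (ConvCode.recip F G) =
      ConvCode.Rmat F (ConvCode.rowDeg F G) * (ConvCode.matA F G)ᵀ * ConvCode.matC F G +
        ConvCode.Rmat F (ConvCode.rowDeg F G) * (ConvCode.matB F G)ᵀ * ConvCode.matE F G ∧
    -- E' = B R C + (I − B Bᵀ) E
    ConvCode.ccfE F (ConvCode.recip F G) =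
      ConvCode.matB F G * ConvCode.Rmat F (ConvCode.rowDeg F G) * ConvCode.matC F G +
        (1 - ConvCode.matB F G * (ConvCode.matB F G)ᵀ) * ConvCode.matE F G ∧
    -- L Lᵀ = I, hence L ∈ GL_{δ+k}(F)
    L * Lᵀ = 1 ∧
    (∃ Linv, L * Linv = 1 ∧ Linv * L = 1) :=
  statement18_general k n G hG L hL
end
end
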